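/- Define φ(t) = −(1/2) ln(27/4) + (3/2) ln(t² + 1) − ln t − (1/12)(2t − 1/t)² for t ≥ 1. Then φ is strictly decreasing on (1, ∞), φ(1) = (1/2) ln(32/27) − 1/12 > 0, and φ(t) → −∞ as t → +∞; consequently φ has a unique zero t* in (1, ∞). (Via the substitution α = (t + 1/t)², φ(t) equals the energy difference F̂_b(q₊) − F̂_b(q₀) between the nematic and isotropic stationary points of the quasi-entropy bulk energy, so this establishes a unique first-order phase transition point α* = (t* + 1/t*)².) -/

import Mathlib

/-!
`φ'(t) = -(2t² - 1)²(t² - 1) / (6t³(t² + 1))`, which is negative for `t > 1`, so `φ` is strictly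
decreasing there. For `t ≥ 1` the logarithms grow at most linearly while `(2t - 1/t)² ≥ t²`,
which gives `φ(t) ≤ C - t`. A strictly decreasing continuous function that starts positive and
tends to `-∞` has exactly one zero, by the intermediate value theorem.
-/

open Real Filter

/-- `φ(t) = −(1/2) ln(27/4) + (3/2) ln(t² + 1) − ln t − (1/12)(2t − 1/t)²`:
the energy difference `F̂_b(q₊) − F̂_b(q₀)` of the quasi-entropy bulk energy
under the substitution `α = (t + 1/t)²`. -/
noncomputable def phiEnergyDiff (t : ℝ) : ℝ :=
  -(1/2) * Real.log (27/4) + (3/2) * Real.log (t ^ 2 + 1) - Real.log t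
    - (1/12) * (2 * t - 1 / t) ^ 2

section

variable {α δ : Type*} [ConditionallyCompleteLinearOrder α] [TopologicalSpace α] [OrderTopology α]
  [DenselyOrdered α] [LinearOrder δ] [TopologicalSpace δ] [OrderClosedTopology δ]

theorem StrictAntiOn.existsUnique_eq_of_tendsto_atBot {f : α → δ} {a : α} {y : δ}
    (hf : ContinuousOn f (Set.Ici a)) (hanti : StrictAntiOn f (Set.Ioi a))
    (hbot : Tendsto f atTop atBot) (hy : y < f a) :
    ∃! t, t ∈ Set.Ioi a ∧ f t = y := by
  obtain ⟨t, ht, rfl⟩ := intermediate_value_Ioi' hf hbot hy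
  exact ⟨t, ⟨ht, rfl⟩, fun s ⟨hs, hst⟩ => hanti.injOn hs ht hst⟩

end

theorem hasDerivAt_phiEnergyDiff {t : ℝ} (ht : 0 < t) :
    HasDerivAt phiEnergyDiff
      (-((2 * t ^ 2 - 1) ^ 2 * (t ^ 2 - 1)) / (6 * t ^ 3 * (t ^ 2 + 1))) t := by
  have hsq : HasDerivAt (fun x : ℝ => x ^ 2 + 1) (2 * t) t := by
    simpa using (hasDerivAt_pow 2 t).add_const 1
  have hlog : HasDerivAt (fun x : ℝ => Real.log (x ^ 2 + 1)) ((2 * t) / (t ^ 2 + 1)) t :=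
    hsq.log (by positivity)
  have hinv : HasDerivAt (fun x : ℝ => 1 / x) (-(t ^ 2)⁻¹) t := by
    simpa only [one_div] using hasDerivAt_inv ht.ne'
  have hquad : HasDerivAt (fun x : ℝ => 2 * x - 1 / x) (2 * 1 - -(t ^ 2)⁻¹) t :=
    ((hasDerivAt_id' t).const_mul 2).sub hinv
  refine ((((hlog.const_mul (3 / 2)).const_add (-(1 / 2) * Real.log (27 / 4))).sub
    (Real.hasDerivAt_log ht.ne')).sub ((hquad.pow 2).const_mul (1 / 12))).congr_deriv ?_
  push_cast
  field_simp
  ring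

theorem continuousOn_phiEnergyDiff : ContinuousOn phiEnergyDiff (Set.Ici 1) := fun _ ht =>
  (hasDerivAt_phiEnergyDiff (one_pos.trans_le ht)).continuousAt.continuousWithinAt

theorem strictAntiOn_phiEnergyDiff : StrictAntiOn phiEnergyDiff (Set.Ioi 1) := by
  refine (strictAntiOn_of_deriv_neg (convex_Ici 1) continuousOn_phiEnergyDiff ?_).mono
    Set.Ioi_subset_Ici_self
  intro t ht
  rw [interior_Ici] at ht
  have ht' : (1 : ℝ) < t := ht
  rw [(hasDerivAt_phiEnergyDiff (one_pos.trans ht')).deriv]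
  have hpos : 0 < (2 * t ^ 2 - 1) ^ 2 * (t ^ 2 - 1) := by
    have : 1 < t ^ 2 := one_lt_pow₀ ht' two_ne_zero
    exact mul_pos (pow_pos (by linarith) 2) (by linarith)
  exact div_neg_of_neg_of_pos (neg_neg_of_pos hpos) (by positivity)

theorem phiEnergyDiff_one : phiEnergyDiff 1 = (1 / 2) * Real.log (32 / 27) - 1 / 12 := by
  have h : Real.log (32 / 27) = 3 * Real.log 2 - Real.log (27 / 4) := by
    rw [show (32 / 27 : ℝ) = 2 ^ 3 / (27 / 4) by norm_num, Real.log_div (by norm_num) (by norm_num),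
      Real.log_pow]
    norm_num
  rw [h, phiEnergyDiff]
  norm_num
  ring

theorem phiEnergyDiff_one_pos : 0 < phiEnergyDiff 1 := by
  -- `φ(1) > 0` amounts to `e < (32/27)⁶ ≈ 2.77`
  have h : 1 < Real.log ((32 / 27 : ℝ) ^ 6) := by
    rw [Real.lt_log_iff_exp_lt (by positivity)]
    linarith [Real.exp_one_lt_d9]
  rw [Real.log_pow] at h
  rw [phiEnergyDiff_one]
  push_cast at h
  linarith

theorem phiEnergyDiff_le_const_sub (t : ℝ) (ht : 1 ≤ t) :
    phiEnergyDiff t ≤ -(1 / 2) * Real.log (27 / 4) + (3 / 2) * Real.log 2 + 25 - t := by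
  have ht0 : 0 < t := one_pos.trans_le ht
  have hlog_sq : Real.log (t ^ 2 + 1) ≤ Real.log 2 + 2 * Real.log t := by
    calc Real.log (t ^ 2 + 1) ≤ Real.log (2 * t ^ 2) :=
          Real.log_le_log (by positivity) (by nlinarith)
      _ = Real.log 2 + 2 * Real.log t := by
          rw [Real.log_mul (by norm_num) (by positivity), Real.log_pow]; norm_num
  have hlog : Real.log t ≤ t - 1 := Real.log_le_sub_one_of_pos ht0
  have hquad : t ^ 2 ≤ (2 * t - 1 / t) ^ 2 := by
    have : 1 / t ≤ t := by rw [div_le_iff₀ ht0]; nlinarith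
    nlinarith
  -- `2t - t²/12 ≤ 27 - t` is `(t - 18)² ≥ 0`
  have hpoly : 0 ≤ (t - 18) ^ 2 := sq_nonneg _
  rw [phiEnergyDiff]
  nlinarith

theorem tendsto_phiEnergyDiff_atTop : Tendsto phiEnergyDiff atTop atBot := by
  refine tendsto_atBot_mono' atTop (eventually_atTop.2 ⟨1, phiEnergyDiff_le_const_sub⟩) ?_
  exact tendsto_atBot_add_const_left _ (-(1 / 2) * Real.log (27 / 4) + (3 / 2) * Real.log 2 + 25)
    tendsto_neg_atTop_atBot |>.congr fun t => by ring

/-- `φ` is strictly decreasing on `(1, ∞)`, `φ(1) = (1/2) ln(32/27) − 1/12 > 0`,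
`φ(t) → −∞` as `t → +∞`, and consequently `φ` has a unique zero in `(1, ∞)`. -/
theorem phiEnergyDiff_unique_zero :
    StrictAntiOn phiEnergyDiff (Set.Ioi (1:ℝ)) ∧
    phiEnergyDiff 1 = (1/2) * Real.log (32/27) - 1/12 ∧
    0 < phiEnergyDiff 1 ∧
    Tendsto phiEnergyDiff atTop atBot ∧
    ∃! t : ℝ, t ∈ Set.Ioi (1:ℝ) ∧ phiEnergyDiff t = 0 :=
  ⟨strictAntiOn_phiEnergyDiff, phiEnergyDiff_one, phiEnergyDiff_one_pos,
    tendsto_phiEnergyDiff_atTop,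
    strictAntiOn_phiEnergyDiff.existsUnique_eq_of_tendsto_atBot continuousOn_phiEnergyDiff
      tendsto_phiEnergyDiff_atTop phiEnergyDiff_one_pos⟩
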